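/- arXiv:1812.00160 — 3 statements merged into one kernel-verified Lean document; each statement's English description precedes it below -/
import Mathlib

section
/- Let W1 and W2 be B-DMCs with finite output alphabets Y1 and Y2, and let (W⁻, W⁺) be their irregular kernel transform. Then Z(W⁺) = Z(W1)·Z(W2). -/
/-! The Bhattacharyya term of `W⁺` at the output `(y1, y2, u1)` factors as
`½ · √(W1(y1|u1) W1(y1|u1+1)) · √(W2(y2|0) W2(y2|1))`; summing over `u1 ∈ ZMod 2` produces the
`W1` factor twice, which cancels the `½`, and the remaining double sum is `Z(W1) · Z(W2)`. -/

open Finset Real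

/-- A binary-input discrete memoryless channel (B-DMC): nonnegative entries
and each row (fixed input) sums to 1. -/
def IsBDMC {Y : Type*} [Fintype Y] (W : Y → ZMod 2 → ℝ) : Prop :=
  (∀ y x, 0 ≤ W y x) ∧ (∀ x, ∑ y, W y x = 1)

/-- Bhattacharyya parameter Z(W). -/
noncomputable def bhatt {Y : Type*} [Fintype Y] (W : Y → ZMod 2 → ℝ) : ℝ :=
  ∑ y, Real.sqrt (W y 0 * W y 1)

/-- The plus-channel W⁺ of the irregular kernel transform. -/
noncomputable def Wplus {Y1 Y2 : Type*} (W1 : Y1 → ZMod 2 → ℝ)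
    (W2 : Y2 → ZMod 2 → ℝ) : Y1 × Y2 × ZMod 2 → ZMod 2 → ℝ :=
  fun y u2 => (1 / 2) * W1 y.1 (y.2.2 + u2) * W2 y.2.1 u2

lemma sqrt_Wplus_mul_eq {Y1 Y2 : Type*} {W1 : Y1 → ZMod 2 → ℝ} (W2 : Y2 → ZMod 2 → ℝ)
    (hW1 : ∀ y x, 0 ≤ W1 y x) (y1 : Y1) (y2 : Y2) (u1 : ZMod 2) :
    √(Wplus W1 W2 (y1, y2, u1) 0 * Wplus W1 W2 (y1, y2, u1) 1) =
      √(W1 y1 u1 * W1 y1 (u1 + 1)) * √(W2 y2 0 * W2 y2 1) / 2 := by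
  have hprod : Wplus W1 W2 (y1, y2, u1) 0 * Wplus W1 W2 (y1, y2, u1) 1 =
      (W1 y1 u1 * W1 y1 (u1 + 1)) * (W2 y2 0 * W2 y2 1) / 2 ^ 2 := by
    simp only [Wplus, add_zero]
    ring
  rw [hprod, Real.sqrt_div' _ (by positivity), Real.sqrt_sq zero_le_two,
    Real.sqrt_mul (mul_nonneg (hW1 _ _) (hW1 _ _))]

lemma sum_sqrt_mul_add_one (f : ZMod 2 → ℝ) :
    ∑ u : ZMod 2, √(f u * f (u + 1)) = 2 * √(f 0 * f 1) := by
  rw [show (univ : Finset (ZMod 2)) = {0, 1} from rfl, sum_pair zero_ne_one, zero_add,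
    show (1 + 1 : ZMod 2) = 0 from rfl, mul_comm (f 1), two_mul]

theorem bhatt_Wplus_general {Y1 Y2 : Type*} [Fintype Y1] [Fintype Y2]
    (W1 : Y1 → ZMod 2 → ℝ) (W2 : Y2 → ZMod 2 → ℝ)
    (h1 : IsBDMC W1) :
    bhatt (Wplus W1 W2) = bhatt W1 * bhatt W2 := by
  calc bhatt (Wplus W1 W2)
      = ∑ y1, ∑ y2, (∑ u1 : ZMod 2, √(W1 y1 u1 * W1 y1 (u1 + 1))) *
          √(W2 y2 0 * W2 y2 1) / 2 := by
        simp only [bhatt, Fintype.sum_prod_type, sqrt_Wplus_mul_eq W2 h1.1, ← sum_div,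
          ← sum_mul]
    _ = ∑ y1, ∑ y2, √(W1 y1 0 * W1 y1 1) * √(W2 y2 0 * W2 y2 1) := by
        simp only [sum_sqrt_mul_add_one (W1 _), mul_assoc,
          mul_div_cancel_left₀ _ (two_ne_zero' ℝ)]
    _ = bhatt W1 * bhatt W2 := by
        rw [bhatt, bhatt, sum_mul_sum]

/-- Z(W⁺) = Z(W1)·Z(W2). -/
theorem bhatt_Wplus {Y1 Y2 : Type*} [Fintype Y1] [Fintype Y2]
    (W1 : Y1 → ZMod 2 → ℝ) (W2 : Y2 → ZMod 2 → ℝ)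
    (h1 : IsBDMC W1) (h2 : IsBDMC W2) :
    bhatt (Wplus W1 W2) = bhatt W1 * bhatt W2 :=
  bhatt_Wplus_general W1 W2 h1
end

section
/- For all nonnegative real numbers a, b, c, d: √((ab + cd)·(ad + cb)) ≤ (√(ab) + √(cd))·(√(ad) + √(cb)) − 2·√(abcd), with equality whenever a = c, or b = d, or abcd = 0. -/
/-!
Write `a, b, c, d` as the squares of `p, q, r, s ≥ 0`; then every square root on the right-hand
side is a monomial, and the right-hand side becomes `R = (pq + rs)(ps + rq) - 2pqrs`. This equals
`qs(p - r)² + pr(q - s)² + 2pqrs ≥ 0`, and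
`R² = (p²q² + r²s²)(p²s² + r²q²) + 2pqrs((p - r)(q - s))²`,
so the inequality holds, with equality as soon as `pqrs(p - r)(q - s) = 0`.
-/

open Real

section Polynomial

variable (p q r s : ℝ)

lemma mul_add_mul_sub_two_mul_eq :
    (p * q + r * s) * (p * s + r * q) - 2 * (p * q * r * s) =
      q * s * (p - r) ^ 2 + p * r * (q - s) ^ 2 + 2 * (p * q * r * s) := by
  ring

lemma mul_add_mul_sub_two_mul_sq_eq :
    ((p * q + r * s) * (p * s + r * q) - 2 * (p * q * r * s)) ^ 2 =
      ((p * q) ^ 2 + (r * s) ^ 2) * ((p * s) ^ 2 + (r * q) ^ 2) +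
        2 * (p * q * r * s) * ((p - r) * (q - s)) ^ 2 := by
  ring

variable {p q r s}

lemma mul_add_mul_sub_two_mul_nonneg (hp : 0 ≤ p) (hq : 0 ≤ q) (hr : 0 ≤ r) (hs : 0 ≤ s) :
    0 ≤ (p * q + r * s) * (p * s + r * q) - 2 * (p * q * r * s) := by
  rw [mul_add_mul_sub_two_mul_eq]; positivity

lemma sqrt_mul_le_mul_add_mul_sub_two_mul (hp : 0 ≤ p) (hq : 0 ≤ q) (hr : 0 ≤ r) (hs : 0 ≤ s) :
    √(((p * q) ^ 2 + (r * s) ^ 2) * ((p * s) ^ 2 + (r * q) ^ 2)) ≤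
      (p * q + r * s) * (p * s + r * q) - 2 * (p * q * r * s) := by
  have hR := mul_add_mul_sub_two_mul_nonneg hp hq hr hs
  rw [sqrt_le_left hR, mul_add_mul_sub_two_mul_sq_eq]
  have : 0 ≤ 2 * (p * q * r * s) * ((p - r) * (q - s)) ^ 2 := by positivity
  linarith

lemma sqrt_mul_eq_mul_add_mul_sub_two_mul (hp : 0 ≤ p) (hq : 0 ≤ q) (hr : 0 ≤ r) (hs : 0 ≤ s)
    (h : p * q * r * s * ((p - r) * (q - s)) = 0) :
    √(((p * q) ^ 2 + (r * s) ^ 2) * ((p * s) ^ 2 + (r * q) ^ 2)) =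
      (p * q + r * s) * (p * s + r * q) - 2 * (p * q * r * s) := by
  have hR := mul_add_mul_sub_two_mul_nonneg hp hq hr hs
  rw [sqrt_eq_iff_eq_sq (by positivity) hR, mul_add_mul_sub_two_mul_sq_eq]
  linear_combination (-2 * ((p - r) * (q - s))) * h

end Polynomial

/-- √((ab+cd)(ad+cb)) ≤ (√(ab)+√(cd))(√(ad)+√(cb)) − 2√(abcd),
with equality whenever a = c, or b = d, or abcd = 0. -/
theorem sqrt_ineq (a b c d : ℝ) (ha : 0 ≤ a) (hb : 0 ≤ b) (hc : 0 ≤ c)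
    (hd : 0 ≤ d) :
    Real.sqrt ((a * b + c * d) * (a * d + c * b)) ≤
      (Real.sqrt (a * b) + Real.sqrt (c * d)) *
        (Real.sqrt (a * d) + Real.sqrt (c * b)) -
      2 * Real.sqrt (a * b * c * d) ∧
    ((a = c ∨ b = d ∨ a * b * c * d = 0) →
      Real.sqrt ((a * b + c * d) * (a * d + c * b)) =
        (Real.sqrt (a * b) + Real.sqrt (c * d)) *
          (Real.sqrt (a * d) + Real.sqrt (c * b)) -
        2 * Real.sqrt (a * b * c * d)) := by
  obtain ⟨p, hp, rfl⟩ : ∃ p, 0 ≤ p ∧ a = p ^ 2 := ⟨√a, sqrt_nonneg a, (sq_sqrt ha).symm⟩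
  obtain ⟨q, hq, rfl⟩ : ∃ q, 0 ≤ q ∧ b = q ^ 2 := ⟨√b, sqrt_nonneg b, (sq_sqrt hb).symm⟩
  obtain ⟨r, hr, rfl⟩ : ∃ r, 0 ≤ r ∧ c = r ^ 2 := ⟨√c, sqrt_nonneg c, (sq_sqrt hc).symm⟩
  obtain ⟨s, hs, rfl⟩ : ∃ s, 0 ≤ s ∧ d = s ^ 2 := ⟨√d, sqrt_nonneg d, (sq_sqrt hd).symm⟩
  simp (disch := positivity) only [← mul_pow, sqrt_sq]
  refine ⟨sqrt_mul_le_mul_add_mul_sub_two_mul hp hq hr hs, fun h ↦ ?_⟩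
  refine sqrt_mul_eq_mul_add_mul_sub_two_mul hp hq hr hs ?_
  rcases h with h | h | h
  · rw [(sq_eq_sq₀ hp hr).1 h, sub_self, zero_mul, mul_zero]
  · rw [(sq_eq_sq₀ hq hs).1 h, sub_self, mul_zero, mul_zero]
  · rw [pow_eq_zero_iff two_ne_zero |>.1 h, zero_mul]
end

section
/- Let a, b be real numbers with 0 < a < 1, b·(1−b) ≥ 0 and (2a−b)·(1−2a+b) ≥ 0. Then √(b·(1−b)/(a·(1−a))) + √((2a−b)·(1−2a+b)/(a·(1−a))) ≤ 2·√(1 − (a−b)²/(a·(1−a))); moreover, if b ≠ a then the left-hand side is strictly less than 2. -/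
/-!
Writing `x` and `y` for the two radicands, the polynomial identity
`b(1-b) + (2a-b)(1-2a+b) = 2(a(1-a) - (a-b)²)` gives `x + y = 2s`, where `s` is the radicand on
the right. Concavity of the square root (in the form `(√x + √y)² ≤ 2(x + y)`) then yields
`√x + √y ≤ 2√s`, and `s < 1` as soon as `b ≠ a`.
-/

theorem sqrt_add_sqrt_le_two_mul_sqrt_half_add {x y : ℝ} (hx : 0 ≤ x) (hy : 0 ≤ y) :
    √x + √y ≤ 2 * √((x + y) / 2) := by
  rw [show 2 * √((x + y) / 2) = √(2 * (x + y)) by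
    rw [← Real.sqrt_sq zero_le_two, ← Real.sqrt_mul (sq_nonneg 2)]; ring_nf]
  rw [Real.le_sqrt (by positivity) (by positivity)]
  nlinarith [sq_nonneg (√x - √y), Real.sq_sqrt hx, Real.sq_sqrt hy]

theorem div_add_div_eq_two_mul_one_sub_sq_div {K : Type*} [Field K] (a b : K)
    (h : a * (1 - a) ≠ 0) :
    b * (1 - b) / (a * (1 - a)) + (2 * a - b) * (1 - 2 * a + b) / (a * (1 - a)) =
      2 * (1 - (a - b) ^ 2 / (a * (1 - a))) := by
  rw [← add_div, div_eq_iff h, mul_assoc, one_sub_mul, div_mul_cancel₀ _ h]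
  ring

/-- the ζ bound. -/
theorem zeta_bound (a b : ℝ) (ha0 : 0 < a) (ha1 : a < 1)
    (hb : 0 ≤ b * (1 - b)) (hb' : 0 ≤ (2 * a - b) * (1 - 2 * a + b)) :
    Real.sqrt (b * (1 - b) / (a * (1 - a))) +
      Real.sqrt ((2 * a - b) * (1 - 2 * a + b) / (a * (1 - a))) ≤
      2 * Real.sqrt (1 - (a - b) ^ 2 / (a * (1 - a))) ∧
    (b ≠ a →
      Real.sqrt (b * (1 - b) / (a * (1 - a))) +
        Real.sqrt ((2 * a - b) * (1 - 2 * a + b) / (a * (1 - a))) < 2) := by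
  have hD : 0 < a * (1 - a) := mul_pos ha0 (sub_pos.2 ha1)
  have hbound :=
    sqrt_add_sqrt_le_two_mul_sqrt_half_add (div_nonneg hb hD.le) (div_nonneg hb' hD.le)
  rw [div_add_div_eq_two_mul_one_sub_sq_div a b hD.ne', mul_div_cancel_left₀ _ two_ne_zero]
    at hbound
  refine ⟨hbound, fun hne => hbound.trans_lt ?_⟩
  have hs : 1 - (a - b) ^ 2 / (a * (1 - a)) < 1 :=
    sub_lt_self _ (div_pos (sq_pos_of_ne_zero (sub_ne_zero.2 hne.symm)) hD)
  have hsqrt : √(1 - (a - b) ^ 2 / (a * (1 - a))) < 1 := by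
    rwa [Real.sqrt_lt' one_pos, one_pow]
  linarith
end
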